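/- Let J be the representation of (P,θ) with J₀ = k and J_z = k^z for all z ∈ θ. Then H(J) ≅ E, the injective envelope of the simple projective right A-module e₀A; in particular dim_k E e_z = card(z) for each z ∈ θ and dim_k E e₀ = 1. -/

import Mathlib

open scoped Classical

/-! ## Posets with involution and their vector-space representations -/

structure PosetInv (P : Type) [PartialOrder P] where
  σ : P → P
  invol : ∀ x, σ (σ x) = x

namespace PosetInv

variable {P : Type} [PartialOrder P]

/-- The equivalence relation whose classes are `{x, σ x}`. -/
def r (I : PosetInv P) (x y : P) : Prop := y = x ∨ y = I.σ x

theorem r_refl (I : PosetInv P) (x : P) : I.r x x := Or.inl rfl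

theorem r_symm (I : PosetInv P) {x y : P} (h : I.r x y) : I.r y x := by
  rcases h with rfl | rfl
  · exact Or.inl rfl
  · exact Or.inr (I.invol x).symm

theorem r_trans (I : PosetInv P) {x y z : P} (h1 : I.r x y) (h2 : I.r y z) : I.r x z := by
  rcases h1 with rfl | rfl
  · exact h2
  · rcases h2 with rfl | rfl
    · exact Or.inr rfl
    · rw [I.invol]; exact Or.inl rfl

def setoid (I : PosetInv P) : Setoid P := ⟨I.r, ⟨I.r_refl, I.r_symm, I.r_trans⟩⟩

/-- The set `θ` of equivalence classes. -/
def Classes (I : PosetInv P) : Type := Quotient I.setoid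

/-- The class `[x]` of an element. -/
def cls (I : PosetInv P) (x : P) : I.Classes := Quotient.mk I.setoid x

/-- The underlying set of elements of a class. -/
def carrier (I : PosetInv P) : I.Classes → Set P :=
  Quotient.lift (fun x => {y | I.r x y}) (by
    intro a b hab
    ext y
    constructor
    · intro h; exact I.r_trans (I.r_symm hab) h
    · intro h; exact I.r_trans hab h)

theorem mem_cls (I : PosetInv P) (x : P) : x ∈ I.carrier (I.cls x) := I.r_refl x

theorem sigma_mem_cls (I : PosetInv P) (x : P) : I.σ x ∈ I.carrier (I.cls x) := Or.inr rfl

end PosetInv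

open PosetInv

/-- A vector-space representation `V = (V₀, V_z)_{z ∈ θ}` of the poset with involution
`(P, θ)`:  a finite-dimensional space `V₀` together with, for each class `z`, a subspace
`V_z ⊆ V₀^z` (functions on the class), satisfying `V_y⁺ ⊆ V_x⁻` for `y < x`. -/
structure RepI (k : Type) [Field k] {P : Type} [PartialOrder P] (I : PosetInv P) where
  V0 : Type
  [acg : AddCommGroup V0]
  [mod : Module k V0]
  [fd : FiniteDimensional k V0]
  Vz : ∀ z : I.Classes, Submodule k (↥(I.carrier z) → V0)
  compat : ∀ ⦃x y : P⦄, y < x → ∀ h ∈ Vz (I.cls y),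
    (fun w : ↥(I.carrier (I.cls x)) => if (w : P) = x then h ⟨y, I.mem_cls y⟩ else 0)
      ∈ Vz (I.cls x)

attribute [instance] RepI.acg RepI.mod RepI.fd

variable {k : Type} [Field k] {P : Type} [PartialOrder P] {I : PosetInv P}

/-- A morphism of representations:  a linear map `φ : V₀ → W₀` with `φ^z(V_z) ⊆ W_z`. -/
@[ext]
structure Hom (V W : RepI k I) where
  φ : V.V0 →ₗ[k] W.V0
  maps : ∀ z, ∀ h ∈ V.Vz z, (fun w => φ (h w)) ∈ W.Vz z

namespace Hom

def comp {U V W : RepI k I} (g : Hom V W) (f : Hom U V) : Hom U W :=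
  ⟨g.φ ∘ₗ f.φ, fun z h hh => g.maps z _ (f.maps z h hh)⟩

def idH (V : RepI k I) : Hom V V := ⟨LinearMap.id, fun _ _ hh => hh⟩

def zeroH (V W : RepI k I) : Hom V W :=
  ⟨0, fun z _ _ => (W.Vz z).zero_mem⟩

end Hom

/-- `f` is a proper epimorphism:  surjective on `V₀` and on each `V_z`. -/
def ProperEpi {V W : RepI k I} (f : Hom V W) : Prop :=
  Function.Surjective f.φ ∧
    ∀ z, ∀ g ∈ W.Vz z, ∃ h ∈ V.Vz z, (fun w => f.φ (h w)) = g

/-- `f` is a proper monomorphism:  injective on `U₀`, and the elements of `V_z` all of whose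
coordinates lie in the image of `f` are exactly the images of elements of `U_z`. -/
def ProperMono {U V : RepI k I} (f : Hom U V) : Prop :=
  Function.Injective f.φ ∧
    ∀ z, ∀ h ∈ V.Vz z, (∀ w, h w ∈ LinearMap.range f.φ) →
      ∃ g ∈ U.Vz z, (fun w => f.φ (g w)) = h

/-- `(u, v)` is an `ε`-sequence:  `0 → U₀ → V₀ → W₀ → 0` and each
`0 → U_z → V_z → W_z → 0` is exact. -/
def IsEpsSeq {U V W : RepI k I} (u : Hom U V) (v : Hom V W) : Prop :=
  Function.Injective u.φ ∧ Function.Surjective v.φ ∧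
    LinearMap.range u.φ = LinearMap.ker v.φ ∧
    ∀ z, (∀ h ∈ W.Vz z, ∃ g ∈ V.Vz z, (fun w => v.φ (g w)) = h) ∧
      (∀ g ∈ V.Vz z, (fun w => v.φ (g w)) = 0 →
        ∃ p ∈ U.Vz z, (fun w => u.φ (p w)) = g)

variable {k : Type} [Field k] {P : Type} [PartialOrder P]

/-- The generating set of `P(w)_z` for a class `z = (a₁, b₁)`:  the functions
`(λ(a,a₁)e₁, 0), (0, λ(a,b₁)e₁), (λ(b,a₁)e₂, 0), (0, λ(b,b₁)e₂)`, where `e_c = g c` for `c`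
in the class of `a`; i.e. all `i_{x'} (g c)` with `c < x'`. -/
def genset (I : PosetInv P) (a : P) {V0 : Type} [AddCommGroup V0]
    (g : ↥(I.carrier (I.cls a)) → V0) (z : I.Classes) : Set (↥(I.carrier z) → V0) :=
  {f | ∃ (x' : ↥(I.carrier z)) (c : ↥(I.carrier (I.cls a))),
    (c : P) < (x' : P) ∧ f = fun w => if w = x' then g c else 0}

/-- `Q` is (isomorphic to) the representation `P(w)` for the class `w = [a]`:  there is a
basis of `Q₀` indexed by the class of `a` (so `e₁ = B a`, `e₂ = B b`, or a single `e` for a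
singleton class), `Q_w` is spanned by the generator `B` together with `genset`, and every
other `Q_z` is spanned by `genset`. -/
def IsPw {I : PosetInv P} (Q : RepI k I) (a : P) : Prop :=
  ∃ B : Module.Basis ↥(I.carrier (I.cls a)) k Q.V0,
    Q.Vz (I.cls a) = Submodule.span k ({⇑B} ∪ genset I a ⇑B (I.cls a)) ∧
    ∀ z, z ≠ I.cls a → Q.Vz z = Submodule.span k (genset I a ⇑B z)

/-- `Q` is (isomorphic to) the trivial representation `S = (k, 0)`. -/
def IsS {k : Type} [Field k] {P : Type} [PartialOrder P] {I : PosetInv P}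
    (Q : RepI k I) : Prop :=
  Module.finrank k Q.V0 = 1 ∧ ∀ z, Q.Vz z = ⊥

/-- Finite direct sums of representations, computed componentwise. -/
def dsum {k : Type} [Field k] {P : Type} [PartialOrder P] {I : PosetInv P}
    {ι : Type} [Fintype ι] (F : ι → RepI k I) : RepI k I where
  V0 := ∀ i, (F i).V0
  Vz := fun z =>
    { carrier := {h | ∀ i, (fun w => h w i) ∈ (F i).Vz z}
      add_mem' := fun hp hq i => ((F i).Vz z).add_mem (hp i) (hq i)
      zero_mem' := fun i => ((F i).Vz z).zero_mem
      smul_mem' := fun c _ hp i => ((F i).Vz z).smul_mem c (hp i) }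
  compat := by
    intro x y hxy h hh i
    have hc := (F i).compat hxy _ (hh i)
    have he : (fun w : ↥(I.carrier (I.cls x)) =>
        (if (w : P) = x then h ⟨y, I.mem_cls y⟩ else 0) i)
        = fun w : ↥(I.carrier (I.cls x)) =>
            if (w : P) = x then h ⟨y, I.mem_cls y⟩ i else 0 := by
      funext w; split <;> rfl
    show (fun w : ↥(I.carrier (I.cls x)) =>
        (if (w : P) = x then h ⟨y, I.mem_cls y⟩ else 0) i) ∈ (F i).Vz (I.cls x)
    rw [he]; exact hc

variable {k : Type} [Field k] {P : Type} [PartialOrder P] {I : PosetInv P}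

set_option synthInstance.maxHeartbeats 1000000

/-- The morphisms `V → W`, as a `k`-subspace of the space of linear maps `V₀ → W₀`. -/
def homSubmodule (V W : RepI k I) : Submodule k (V.V0 →ₗ[k] W.V0) where
  carrier := {φ | ∀ z, ∀ h ∈ V.Vz z, (fun w => φ (h w)) ∈ W.Vz z}
  add_mem' := by
    intro φ ψ hφ hψ z h hh
    have := (W.Vz z).add_mem (hφ z h hh) (hψ z h hh)
    simpa [LinearMap.add_apply, Pi.add_def] using this
  zero_mem' := fun z _ _ => (W.Vz z).zero_mem
  smul_mem' := by
    intro c φ hφ z h hh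
    have := (W.Vz z).smul_mem c (hφ z h hh)
    simpa [LinearMap.smul_apply, Pi.smul_def] using this

/-- The endomorphism algebra `End(V)` of a representation, as a subalgebra of
`End_k(V₀)`. -/
def endSubalgebra (U : RepI k I) : Subalgebra k (Module.End k U.V0) where
  carrier := {φ | ∀ z, ∀ h ∈ U.Vz z, (fun w => φ (h w)) ∈ U.Vz z}
  add_mem' := by
    intro φ ψ hφ hψ z h hh
    have := (U.Vz z).add_mem (hφ z h hh) (hψ z h hh)
    simpa [LinearMap.add_apply, Pi.add_def] using this
  mul_mem' := fun hφ hψ z h hh => hφ z _ (hψ z h hh)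
  one_mem' := fun _ _ hh => hh
  zero_mem' := fun z _ _ => (U.Vz z).zero_mem
  algebraMap_mem' := by
    intro c z h hh
    have := (U.Vz z).smul_mem c hh
    simpa [Pi.smul_def] using this

/-- Right action of `End(U)` on `Hom(U, V)` by precomposition, making `Hom(U, V)` a right
`End(U)`-module. -/
instance homModule (U V : RepI k I) :
    Module (↥(endSubalgebra U))ᵐᵒᵖ ↥(homSubmodule U V) where
  smul a f := ⟨f.1 ∘ₗ (a.unop : Module.End k U.V0),
    fun z h hh => f.2 z _ ((a.unop).2 z h hh)⟩
  one_smul f := Subtype.ext (by ext x; rfl)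
  mul_smul a b f := Subtype.ext (by ext x; rfl)
  smul_zero a := Subtype.ext (by ext x; rfl)
  smul_add a f g := Subtype.ext (by ext x; rfl)
  add_smul a b f := Subtype.ext (by ext x; exact map_add f.1 _ _)
  zero_smul f := Subtype.ext (by ext x; exact map_zero f.1)

/-- The socle of a module:  the sum of all its simple submodules. -/
def socle (R : Type) [Ring R] (M : Type) [AddCommGroup M] [Module R M] :
    Submodule R M :=
  sSup {S : Submodule R M | IsSimpleModule R ↥S}

/-- The idempotent of `End(⊕ᵢ F i)` given by projection onto the summand `i₀`. -/
noncomputable def projHom {ι : Type} [Fintype ι] (F : ι → RepI k I) (i₀ : ι) :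
    ↥(endSubalgebra (dsum F)) := by
  refine ⟨{ toFun := fun v j => if j = i₀ then v j else 0
            map_add' := ?_
            map_smul' := ?_ }, ?_⟩
  · intro v w; funext j
    show (if j = i₀ then (v + w) j else 0)
        = (if j = i₀ then v j else 0) + (if j = i₀ then w j else 0)
    by_cases h : j = i₀
    · simp only [if_pos h]; rfl
    · simp only [if_neg h, add_zero]
  · intro c v; funext j
    show (if j = i₀ then (c • v) j else 0) = c • (if j = i₀ then v j else 0)
    by_cases h : j = i₀
    · simp only [if_pos h]; rfl
    · simp only [if_neg h, smul_zero]
  · intro z h hh i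
    by_cases hi : i = i₀
    · subst hi
      have he : (fun w => (fun j => if j = i then h w j else 0) i) = fun w => h w i := by
        funext w; simp
      show (fun w => (fun j => if j = i then h w j else 0) i) ∈ (F i).Vz z
      rw [he]; exact hh i
    · have he : (fun w => (fun j => if j = i₀ then h w j else 0) i)
          = fun _ => (0 : (F i).V0) := by
        funext w; simp [hi]
      show (fun w => (fun j => if j = i₀ then h w j else 0) i) ∈ (F i).Vz z
      rw [he]; exact ((F i).Vz z).zero_mem

/-- The socle of `Hom(U, V)` is stable under the `k`-action, so it is in particular a
`k`-subspace of `Hom(U, V)`;  this is that subspace. -/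
noncomputable def socK (U V : RepI k I) : Submodule k ↥(homSubmodule U V) where
  carrier := {f | f ∈ socle (↥(endSubalgebra U))ᵐᵒᵖ ↥(homSubmodule U V)}
  add_mem' := fun ha hb => (socle _ _).add_mem ha hb
  zero_mem' := (socle _ _).zero_mem
  smul_mem' := by
    intro c f hf
    have h1 : c • f = (MulOpposite.op
        (⟨algebraMap k (Module.End k U.V0) c, (endSubalgebra U).algebraMap_mem c⟩ :
          ↥(endSubalgebra U))) • f := by
      apply Subtype.ext
      ext x
      show c • (f.1 x) = f.1 (c • x)
      rw [map_smul]
    rw [h1]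
    exact Submodule.smul_mem
      (socle (↥(endSubalgebra U))ᵐᵒᵖ ↥(homSubmodule U V)) _ hf

/-- The action of the functor `H = Hom(⊕P(z) ⊕ S, −)` on a morphism `f : V → W`:  the
induced map `Hom(U, V) → Hom(U, W)` of right `End(U)`-modules. -/
noncomputable def Hmap (U : RepI k I) {V W : RepI k I} (f : ↥(homSubmodule V W)) :
    ↥(homSubmodule U V) →ₗ[(↥(endSubalgebra U))ᵐᵒᵖ] ↥(homSubmodule U W) where
  toFun g := ⟨f.1 ∘ₗ g.1, fun z h hh => f.2 z _ (g.2 z h hh)⟩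
  map_add' := by intro g₁ g₂; apply Subtype.ext; ext x; exact map_add f.1 _ _
  map_smul' := by intro a g; apply Subtype.ext; ext x; rfl

/-- Right multiplication by `a ∈ End(U)` on `Hom(U, V)`, as a `k`-linear map. -/
noncomputable def rmulK {U V : RepI k I} (a : ↥(endSubalgebra U)) :
    ↥(homSubmodule U V) →ₗ[k] ↥(homSubmodule U V) where
  toFun f := ⟨f.1 ∘ₗ (a : Module.End k U.V0), fun z h hh => f.2 z _ (a.2 z h hh)⟩
  map_add' := by intro f g; apply Subtype.ext; ext x; rfl
  map_smul' := by intro c f; apply Subtype.ext; ext x; rfl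

noncomputable instance classesFintype {P : Type} [PartialOrder P] [Fintype P]
    (I : PosetInv P) : Fintype I.Classes :=
  @Quotient.fintype P _ I.setoid fun _ _ => Classical.propDecidable _

/-- The representation `J` with `J₀ = k` and `J_z = k^z` for all `z ∈ θ`. -/
def JRep (k : Type) [Field k] {P : Type} [PartialOrder P] (I : PosetInv P) :
    RepI k I where
  V0 := k
  Vz := fun _ => ⊤
  compat := fun _ _ _ _ _ => Submodule.mem_top


/-! Since every `J_z` is all of `k^z`, `H(J) = Hom(U, J)` is the whole `k`-dual of `U₀`.
The summand `S` gives a functional `ε` on `U₀` vanishing on every `U_z`, so the rank-one maps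
`u ↦ ε(u) v` are endomorphisms of `U`; with `ε(v₀) = 1` they satisfy `a ∘ (ε(·) v) = ε(·) (a v)`
and `(ε(·) v)(v₀) = v`, which identifies `U₀` with the left ideal `Ae₀`.  Baer's criterion then
only asks to extend a functional over `k`.  For `g ≠ 0` in `H(J)` with `g(v) ≠ 0`, the translate
`g ∘ (ε(·) v) = g(v) ε` is a nonzero element of the image of `e₀A ∋ a ↦ ε ∘ a`, which makes the
extension essential.  Finally `H(J) e_i` is the dual of the image of `e_i`, i.e. of the
summand `F i`. -/

section HomToJ

theorem homSubmodule_JRep_eq_top (U : RepI k I) : homSubmodule U (JRep k I) = ⊤ :=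
  Submodule.eq_top_iff'.mpr fun _ _ _ _ => trivial

noncomputable def homJEquivDual (U : RepI k I) :
    homSubmodule U (JRep k I) ≃ₗ[k] Module.Dual k U.V0 :=
  LinearEquiv.ofTop _ (homSubmodule_JRep_eq_top U)

instance homModule_isScalarTower (U V : RepI k I) :
    IsScalarTower k (endSubalgebra U)ᵐᵒᵖ (homSubmodule U V) :=
  ⟨fun c r f => Subtype.ext (LinearMap.ext fun u =>
    map_smul f.1 c ((r.unop : Module.End k U.V0) u))⟩

variable {U : RepI k I}

theorem finrank_range_rmulK_JRep (a : endSubalgebra U) :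
    Module.finrank k (LinearMap.range (rmulK (V := JRep k I) a))
      = Module.finrank k (LinearMap.range (a : Module.End k U.V0)) := by
  have h : rmulK (V := JRep k I) a = (homJEquivDual U).symm.toLinearMap ∘ₗ
      (a : Module.End k U.V0).dualMap ∘ₗ (homJEquivDual U).toLinearMap := rfl
  rw [h, LinearMap.range_comp, LinearMap.range_comp_of_range_eq_top _ (LinearEquiv.range _),
    LinearEquiv.finrank_map_eq, LinearMap.finrank_range_dualMap_eq_finrank_range]

variable (ε : Module.Dual k U.V0)

noncomputable def endToHomJ :
    endSubalgebra U →ₗ[(endSubalgebra U)ᵐᵒᵖ] homSubmodule U (JRep k I) where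
  toFun a := (homJEquivDual U).symm (ε ∘ₗ (a : Module.End k U.V0))
  map_add' _ _ := Subtype.ext (LinearMap.ext fun _ => map_add ε _ _)
  map_smul' _ _ := rfl

theorem injective_endToHomJ_comp_span {p : endSubalgebra U}
    (hp : ∀ u, ε ((p : Module.End k U.V0) u) = 0 → (p : Module.End k U.V0) u = 0) :
    Function.Injective (endToHomJ ε ∘ₗ (Submodule.span (endSubalgebra U)ᵐᵒᵖ {p}).subtype) := by
  refine (injective_iff_map_eq_zero _).mpr fun ⟨x, hx⟩ hx0 => ?_
  obtain ⟨r, rfl⟩ := Submodule.mem_span_singleton.mp hx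
  refine Subtype.ext (Subtype.ext (LinearMap.ext fun u => hp _ ?_))
  exact LinearMap.congr_fun (congrArg (homJEquivDual U) hx0) u

variable (hε : ∀ z, ∀ h ∈ U.Vz z, ∀ w, ε (h w) = 0)
include hε

noncomputable def rankOneEnd : U.V0 →ₗ[k] endSubalgebra U where
  toFun v := ⟨ε.smulRight v, fun z h hh => by
    have h0 : (fun w => ε.smulRight v (h w)) = 0 := funext fun w => by simp [hε z h hh w]
    rw [h0]
    exact zero_mem _⟩
  map_add' _ _ := Subtype.ext (LinearMap.ext fun _ => smul_add _ _ _)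
  map_smul' _ _ := Subtype.ext (LinearMap.ext fun _ => smul_comm _ _ _)

theorem mul_rankOneEnd (a : endSubalgebra U) (v : U.V0) :
    a * rankOneEnd ε hε v = rankOneEnd ε hε ((a : Module.End k U.V0) v) :=
  Subtype.ext (LinearMap.ext fun u => map_smul (a : Module.End k U.V0) (ε u) v)

theorem injective_homSubmodule_JRep {v₀ : U.V0} (hv₀ : ε v₀ = 1) :
    Module.Injective (endSubalgebra U)ᵐᵒᵖ (homSubmodule U (JRep k I)) := by
  refine Module.Baer.injective fun 𝔞 g => ?_
  let evalAt : 𝔞 →ₗ[k] k :=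
    LinearMap.applyₗ v₀ ∘ₗ (homJEquivDual U).toLinearMap ∘ₗ g.restrictScalars k
  obtain ⟨π, hπ⟩ := (𝔞.subtype.restrictScalars k).exists_leftInverse_of_injective
    (LinearMap.ker_eq_bot.mpr Subtype.val_injective)
  let m := (homJEquivDual U).symm
    (evalAt ∘ₗ π ∘ₗ (MulOpposite.opLinearEquiv k).toLinearMap ∘ₗ rankOneEnd ε hε)
  refine ⟨LinearMap.toSpanSingleton _ _ m, fun x hx => Subtype.ext (LinearMap.ext fun v => ?_)⟩
  have hmem : MulOpposite.op (rankOneEnd ε hε v) * x ∈ 𝔞 := 𝔞.smul_mem _ hx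
  show homJEquivDual U (x • m) v = homJEquivDual U (g ⟨x, hx⟩) v
  calc homJEquivDual U (x • m) v
      = evalAt (π (MulOpposite.op (x.unop * rankOneEnd ε hε v))) := by
        rw [mul_rankOneEnd]; rfl
    _ = evalAt ⟨_, hmem⟩ := by
        rw [MulOpposite.op_mul, MulOpposite.op_unop]
        exact congrArg evalAt (LinearMap.congr_fun hπ ⟨_, hmem⟩)
    _ = homJEquivDual U (g ⟨x, hx⟩) v := by
        show (g (MulOpposite.op (rankOneEnd ε hε v) • ⟨x, hx⟩)).1 v₀ = _
        rw [map_smul]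
        show (g ⟨x, hx⟩).1 (ε v₀ • v) = _
        rw [hv₀, one_smul]
        rfl

theorem endToHomJ_comp_span_essential {p : endSubalgebra U}
    (hp : ε ∘ₗ (p : Module.End k U.V0) = ε) {v₀ : U.V0} (hv₀ : ε v₀ = 1)
    (N : Submodule (endSubalgebra U)ᵐᵒᵖ (homSubmodule U (JRep k I))) (hN : N ≠ ⊥) :
    N ⊓ LinearMap.range
      (endToHomJ ε ∘ₗ (Submodule.span (endSubalgebra U)ᵐᵒᵖ {p}).subtype) ≠ ⊥ := by
  obtain ⟨g, hgN, hg0⟩ := (Submodule.ne_bot_iff N).mp hN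
  obtain ⟨v, hv⟩ : ∃ v, homJEquivDual U g v ≠ 0 := by
    by_contra! h
    exact hg0 ((homJEquivDual U).injective (LinearMap.ext h))
  set c := homJEquivDual U g v
  -- `g ∘ rankOneEnd v = c • ε = ε ∘ (p * c)`
  refine (Submodule.ne_bot_iff _).mpr ⟨MulOpposite.op (rankOneEnd ε hε v) • g,
    Submodule.mem_inf.mpr ⟨N.smul_mem _ hgN, ⟨⟨MulOpposite.op (algebraMap k _ c) • p,
      Submodule.smul_mem _ _ (Submodule.mem_span_singleton_self p)⟩, ?_⟩⟩, ?_⟩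
  · refine (homJEquivDual U).injective (LinearMap.ext fun u => ?_)
    show ε ((p : Module.End k U.V0) (c • u)) = homJEquivDual U g (ε u • v)
    rw [map_smul, map_smul, ← LinearMap.comp_apply ε, hp, map_smul, smul_eq_mul, smul_eq_mul,
      mul_comm]
  · intro h0
    have h0v₀ : homJEquivDual U g (ε v₀ • v) = 0 :=
      LinearMap.congr_fun (congrArg (homJEquivDual U) h0) v₀
    rw [hv₀, one_smul] at h0v₀
    exact hv h0v₀

end HomToJ

section DirectSum

variable {ι : Type} [Fintype ι] (F : ι → RepI k I)

noncomputable def dsumSingle (i : ι) : (F i).V0 →ₗ[k] (dsum F).V0 :=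
  LinearMap.single k (fun j => (F j).V0) i

def dsumProj (i : ι) : (dsum F).V0 →ₗ[k] (F i).V0 :=
  LinearMap.proj i

theorem dsumProj_dsumSingle (i : ι) (x : (F i).V0) : dsumProj F i (dsumSingle F i x) = x :=
  Pi.single_eq_same (M := fun j => (F j).V0) i x

theorem projHom_apply (i : ι) (u : (dsum F).V0) (j : ι) :
    (projHom F i : Module.End k (dsum F).V0) u j = if j = i then u j else 0 := rfl

theorem projHom_eq_single_comp_proj (i : ι) :
    (projHom F i : Module.End k (dsum F).V0) = dsumSingle F i ∘ₗ dsumProj F i := by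
  refine LinearMap.ext fun u => funext fun j => ?_
  rw [projHom_apply]
  by_cases h : j = i
  · subst h
    rw [if_pos rfl]
    exact (dsumProj_dsumSingle F j (u j)).symm
  · rw [if_neg h]
    exact (Pi.single_eq_of_ne (M := fun j => (F j).V0) h (u i)).symm

theorem finrank_range_projHom (i : ι) :
    Module.finrank k (LinearMap.range (projHom F i : Module.End k (dsum F).V0))
      = Module.finrank k (F i).V0 := by
  have hsurj : Function.Surjective (dsumProj F i) :=
    fun x => ⟨dsumSingle F i x, dsumProj_dsumSingle F i x⟩
  rw [projHom_eq_single_comp_proj, LinearMap.range_comp_of_range_eq_top _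
      (LinearMap.range_eq_top.mpr hsurj),
    LinearMap.finrank_range_of_inj (Function.LeftInverse.injective (dsumProj_dsumSingle F i))]

variable {F} {i₀ : ι} (e : (F i₀).V0 ≃ₗ[k] k)

theorem dual_dsumProj_vanishes (hS : ∀ z, (F i₀).Vz z = ⊥) (z : I.Classes)
    (h : ↥(I.carrier z) → (dsum F).V0) (hh : h ∈ (dsum F).Vz z) (w : ↥(I.carrier z)) :
    (e.toLinearMap ∘ₗ dsumProj F i₀) (h w) = 0 := by
  have h0 := hh i₀
  rw [hS z, Submodule.mem_bot] at h0
  show e (h w i₀) = 0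
  rw [show h w i₀ = 0 from congrFun h0 w, map_zero]

theorem dsumProj_comp_projHom (i : ι) :
    dsumProj F i ∘ₗ (projHom F i : Module.End k (dsum F).V0) = dsumProj F i := by
  rw [projHom_eq_single_comp_proj, ← LinearMap.comp_assoc]
  exact LinearMap.ext fun u => dsumProj_dsumSingle F i _

theorem projHom_eq_zero_of_dual_eq_zero (u : (dsum F).V0)
    (hu : (e.toLinearMap ∘ₗ dsumProj F i₀) ((projHom F i₀ : Module.End k (dsum F).V0) u) = 0) :
    (projHom F i₀ : Module.End k (dsum F).V0) u = 0 := by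
  rw [LinearMap.comp_apply, ← LinearMap.comp_apply (dsumProj F i₀), dsumProj_comp_projHom,
    LinearEquiv.coe_coe] at hu
  rw [projHom_eq_single_comp_proj, LinearMap.comp_apply,
    e.map_eq_zero_iff.mp hu, map_zero]

end DirectSum

/-- Let `U = ⊕_{z∈θ}P(z) ⊕ S`, `A = End(U)`, and let `J` be the
representation with `J₀ = k`, `J_z = k^z`.  Then `H(J) ≅ E`, the injective envelope of the
simple projective right `A`-module `e₀A`:  `H(J)` is an injective right `A`-module
containing a copy of `e₀A` as an essential submodule.  Moreover
`dim_k E e_z = card(z)` for each `z ∈ θ` and `dim_k E e₀ = 1`. -/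
theorem HJ_injective_envelope
    {k : Type} [Field k] {P : Type} [PartialOrder P] [Fintype P] {I : PosetInv P}
    (F : I.Classes ⊕ Unit → RepI k I)
    (hF1 : ∀ z : I.Classes, ∃ a : P, I.cls a = z ∧ IsPw (F (Sum.inl z)) a)
    (hF2 : IsS (F (Sum.inr ()))) :
    -- `H(J)` is injective
    Module.Injective (↥(endSubalgebra (dsum F)))ᵐᵒᵖ ↥(homSubmodule (dsum F) (JRep k I)) ∧
    -- `H(J)` is an injective envelope of `e₀A`:  it contains `e₀A` essentially
    (∃ ι : ↥(Submodule.span (↥(endSubalgebra (dsum F)))ᵐᵒᵖ {projHom F (Sum.inr ())})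
        →ₗ[(↥(endSubalgebra (dsum F)))ᵐᵒᵖ] ↥(homSubmodule (dsum F) (JRep k I)),
      Function.Injective ι ∧
      ∀ N : Submodule (↥(endSubalgebra (dsum F)))ᵐᵒᵖ ↥(homSubmodule (dsum F) (JRep k I)),
        N ≠ ⊥ → N ⊓ LinearMap.range ι ≠ ⊥) ∧
    -- `dim_k E e_z = card z` and `dim_k E e₀ = 1`
    (∀ z : I.Classes,
      Module.finrank k
        ↥(LinearMap.range (rmulK (V := JRep k I) (projHom F (Sum.inl z))))
        = Nat.card ↥(I.carrier z)) ∧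
    Module.finrank k
      ↥(LinearMap.range (rmulK (V := JRep k I) (projHom F (Sum.inr ())))) = 1 := by
  obtain ⟨hS1, hS2⟩ := hF2
  let e : (F (Sum.inr ())).V0 ≃ₗ[k] k :=
    LinearEquiv.ofFinrankEq _ _ (hS1.trans (Module.finrank_self k).symm)
  let ε := e.toLinearMap ∘ₗ dsumProj F (Sum.inr ())
  have hε := dual_dsumProj_vanishes e hS2
  have hv₀ : ε (dsumSingle F _ (e.symm 1)) = 1 := by
    simp only [ε, LinearMap.comp_apply, dsumProj_dsumSingle, LinearEquiv.coe_coe,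
      LinearEquiv.apply_symm_apply]
  refine ⟨injective_homSubmodule_JRep ε hε hv₀,
    ⟨_, injective_endToHomJ_comp_span ε (projHom_eq_zero_of_dual_eq_zero e),
      fun N => endToHomJ_comp_span_essential ε hε
        (by rw [LinearMap.comp_assoc, dsumProj_comp_projHom]) hv₀ N⟩, fun z => ?_, ?_⟩
  · obtain ⟨a, rfl, B, -⟩ := hF1 z
    rw [finrank_range_rmulK_JRep, finrank_range_projHom, Module.finrank_eq_nat_card_basis B]
  · rw [finrank_range_rmulK_JRep, finrank_range_projHom, hS1]
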